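/- Let n ≥ 1, N > 0, and let F : (0,∞) × ℝⁿ → [0,∞] be measurable. Define G(y) := sup over cubes Q̃ containing y of ( (1/|Q̃|) ∫_{Q̃} F(ℓ(Q̃), z)² dz )^{1/2}, and ℳ₂G(x) := sup over cubes Q containing x of ( (1/|Q|) ∫_Q G(y)² dy )^{1/2}. Then there exists a constant C > 0, depending only on n and N, such that for every x ∈ ℝⁿ: sup over cubes Q containing x of Σ_{j=0}^∞ 2^{−jN} |2^jQ|^{−1/2} · ( sup over s ∈ [ℓ(Q), √2 ℓ(Q)] of (∫_{S_j(Q)} F(s,z)² dz)^{1/2} ) ≤ C · ℳ₂(G)(x). -/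

import Mathlib

/-!
Fix a scale `s ∈ [ℓ, √2ℓ]` and `j`. For every centre `w ∈ 2ʲQ` the cube `Q(w,s)` lies in
`4·2ʲQ`, so by Fubini `sⁿ ∫_{2ʲQ} F(s,·)² ≤ ∫_{4·2ʲQ} ∫_{Q(y,s)} F(s,·)² dy`, and the inner
integral is at most `sⁿ G(y)²` by the definition of `G`. Hence
`∫_{S_j(Q)} F(s,·)² ≤ ∫_{4·2ʲQ} G² ≤ |4·2ʲQ| ℳ₂G(x)²`: each normalised annulus term is at most
`2ⁿ ℳ₂G(x)`, and the weights `2^{-jN}` sum to a geometric series.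
-/

open MeasureTheory ENNReal

noncomputable section

abbrev Euc (n : ℕ) := EuclideanSpace ℝ (Fin n)

/-- The closed axis-parallel cube with center `z` and side length `ℓ`. -/
def cube {n : ℕ} (z : Euc n) (ℓ : ℝ) : Set (Euc n) :=
  {y | ∀ i, |y i - z i| ≤ ℓ / 2}

/-- The dyadic annuli of the cube with center `z` and side length `ℓ`:
`S_0(Q) = Q`, `S_j(Q) = 2^jQ ∖ 2^{j-1}Q` for `j ≥ 1`. -/
def annulus {n : ℕ} (z : Euc n) (ℓ : ℝ) : ℕ → Set (Euc n)
  | 0 => cube z ℓ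
  | j + 1 => cube z ((2 : ℝ) ^ (j + 1) * ℓ) \ cube z ((2 : ℝ) ^ j * ℓ)

/-- `G(y) = sup_{Q̃ ∋ y} ((1/|Q̃|) ∫_{Q̃} F(ℓ(Q̃), z)² dz)^{1/2}`. -/
noncomputable def Gfun {n : ℕ} (F : ℝ → Euc n → ℝ≥0∞) (y : Euc n) : ℝ≥0∞ :=
  ⨆ (w : Euc n) (s : ℝ) (_ : 0 < s) (_ : y ∈ cube w s),
    ((ENNReal.ofReal (s ^ n))⁻¹ * ∫⁻ z in cube w s, F s z ^ 2) ^ ((1 : ℝ) / 2)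

/-- The `L²`-based uncentered maximal operator over cubes,
`ℳ₂h(x) = sup_{Q ∋ x} ((1/|Q|) ∫_Q h²)^{1/2}`. -/
noncomputable def M2 {n : ℕ} (h : Euc n → ℝ≥0∞) (x : Euc n) : ℝ≥0∞ :=
  ⨆ (w : Euc n) (s : ℝ) (_ : 0 < s) (_ : x ∈ cube w s),
    ((ENNReal.ofReal (s ^ n))⁻¹ * ∫⁻ y in cube w s, h y ^ 2) ^ ((1 : ℝ) / 2)

lemma ENNReal.sq_rpow_half (x : ℝ≥0∞) : (x ^ 2) ^ ((1 : ℝ) / 2) = x := by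
  rw [one_div]
  exact_mod_cast ENNReal.pow_rpow_inv_natCast two_ne_zero x

lemma ENNReal.rpow_half_sq (x : ℝ≥0∞) : (x ^ ((1 : ℝ) / 2)) ^ 2 = x := by
  rw [one_div]
  exact_mod_cast ENNReal.rpow_inv_natCast_pow two_ne_zero x

lemma ENNReal.ofReal_four_mul_pow (B : ℝ) (n : ℕ) :
    ENNReal.ofReal ((4 * B) ^ n) = (2 ^ n) ^ 2 * ENNReal.ofReal (B ^ n) := by
  rw [mul_pow, ENNReal.ofReal_mul (by positivity), ENNReal.ofReal_pow zero_le_four,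
    ENNReal.ofReal_ofNat, ← pow_mul, mul_comm n, pow_mul]
  norm_num

section Cubes

variable {n : ℕ}

lemma isClosed_setOf_mem_cube (s : ℝ) : IsClosed {p : Euc n × Euc n | p.2 ∈ cube p.1 s} := by
  change IsClosed {p : Euc n × Euc n | ∀ i, |p.2 i - p.1 i| ≤ s / 2}
  rw [Set.ofPred_forall]
  exact isClosed_iInter fun i => isClosed_le (by fun_prop) continuous_const

lemma measurableSet_cube (z : Euc n) (s : ℝ) : MeasurableSet (cube z s) :=
  ((isClosed_setOf_mem_cube s).preimage (Continuous.prodMk_right z)).measurableSet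

lemma cube_mono (z : Euc n) {s t : ℝ} (h : s ≤ t) : cube z s ⊆ cube z t :=
  fun _ hy i => (hy i).trans (by linarith)

lemma mem_cube_self (y : Euc n) {s : ℝ} (hs : 0 ≤ s) : y ∈ cube y s := by
  intro i
  simp only [sub_self, abs_zero]
  positivity

lemma mem_cube_comm {y w : Euc n} {s : ℝ} : y ∈ cube w s ↔ w ∈ cube y s := by
  simp only [cube, Set.mem_ofPred_eq, abs_sub_comm]

lemma cube_subset_cube_add {z w : Euc n} {B : ℝ} (hw : w ∈ cube z B) (s : ℝ) :
    cube w s ⊆ cube z (B + s) := fun y hy i =>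
  calc |y i - z i| ≤ |y i - w i| + |w i - z i| := abs_sub_le _ _ _
    _ ≤ (B + s) / 2 := by linarith [hy i, hw i]

lemma annulus_subset_cube (z : Euc n) (ℓ : ℝ) (j : ℕ) :
    annulus z ℓ j ⊆ cube z ((2 : ℝ) ^ j * ℓ) := by
  cases j with
  | zero => rw [annulus, pow_zero, one_mul]
  | succ j => exact Set.sdiff_subset

lemma volume_cube (z : Euc n) {s : ℝ} (hs : 0 ≤ s) :
    volume (cube z s) = ENNReal.ofReal (s ^ n) := by
  have hpi : cube z s = (@WithLp.ofLp 2 (Fin n → ℝ)) ⁻¹'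
      Set.univ.pi fun i => Set.Icc (z i - s / 2) (z i + s / 2) := by
    ext y
    simp only [cube, Set.mem_ofPred_eq, Set.mem_preimage, Set.mem_univ_pi, Set.mem_Icc,
      abs_sub_le_iff]
    exact forall_congr' fun i => by constructor <;> intro h <;> constructor <;> linarith [h.1, h.2]
  rw [hpi, (PiLp.volume_preserving_ofLp (Fin n)).measure_preimage
    (by measurability), volume_pi_pi]
  simp only [Real.volume_Icc, add_sub_sub_cancel, add_halves, Finset.prod_const,
    Finset.card_univ, Fintype.card_fin, ENNReal.ofReal_pow hs]

end Cubes

section Averages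

variable {n : ℕ}

def cubeL2Avg (f : Euc n → ℝ≥0∞) (w : Euc n) (s : ℝ) : ℝ≥0∞ :=
  ((ENNReal.ofReal (s ^ n))⁻¹ * ∫⁻ z in cube w s, f z ^ 2) ^ ((1 : ℝ) / 2)

lemma lintegral_cube_sq_le (f : Euc n → ℝ≥0∞) (w : Euc n) {s : ℝ} (hs : 0 < s) {c : ℝ≥0∞}
    (h : cubeL2Avg f w s ≤ c) : ∫⁻ z in cube w s, f z ^ 2 ≤ ENNReal.ofReal (s ^ n) * c ^ 2 := by
  have ha0 : ENNReal.ofReal (s ^ n) ≠ 0 := by positivity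
  calc ∫⁻ z in cube w s, f z ^ 2
      = ENNReal.ofReal (s ^ n) * cubeL2Avg f w s ^ 2 := by
        rw [cubeL2Avg, ENNReal.rpow_half_sq, ← mul_assoc,
          ENNReal.mul_inv_cancel ha0 ENNReal.ofReal_ne_top, one_mul]
    _ ≤ ENNReal.ofReal (s ^ n) * c ^ 2 := by gcongr

lemma cubeL2Avg_le_M2 (h : Euc n → ℝ≥0∞) {x w : Euc n} {s : ℝ} (hs : 0 < s)
    (hx : x ∈ cube w s) : cubeL2Avg h w s ≤ M2 h x :=
  le_iSup₂_of_le w s (le_iSup₂_of_le (f := fun _ _ => _) hs hx le_rfl)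

lemma cubeL2Avg_le_Gfun (F : ℝ → Euc n → ℝ≥0∞) {y w : Euc n} {s : ℝ} (hs : 0 < s)
    (hy : y ∈ cube w s) : cubeL2Avg (F s) w s ≤ Gfun F y :=
  le_iSup₂_of_le w s (le_iSup₂_of_le (f := fun _ _ => _) hs hy le_rfl)

end Averages

section Covering

variable {n : ℕ}

lemma lintegral_mul_volume_cube_le {f : Euc n → ℝ≥0∞} (hf : Measurable f) {s : ℝ}
    {C R : Set (Euc n)} (hC : MeasurableSet C) (hCR : ∀ w ∈ C, cube w s ⊆ R) :
    ∫⁻ w in C, f w * volume (cube w s) ≤ ∫⁻ y in R, ∫⁻ w in cube y s, f w := by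
  set k : Euc n → Euc n → ℝ≥0∞ := fun w y => f w * (cube w s).indicator 1 y
  have hk : Measurable (Function.uncurry k) := by
    have : Function.uncurry k =
        fun p => f p.1 * {p : Euc n × Euc n | p.2 ∈ cube p.1 s}.indicator 1 p := rfl
    rw [this]
    exact (hf.comp measurable_fst).mul
      (measurable_one.indicator (isClosed_setOf_mem_cube s).measurableSet)
  calc ∫⁻ w in C, f w * volume (cube w s)
      = ∫⁻ w in C, ∫⁻ y in R, k w y := by
        refine setLIntegral_congr_fun hC fun w hw => ?_
        rw [lintegral_const_mul _ (measurable_one.indicator (measurableSet_cube w s)),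
          lintegral_indicator_one (measurableSet_cube w s),
          Measure.restrict_apply (measurableSet_cube w s), Set.inter_eq_left.mpr (hCR w hw)]
    _ = ∫⁻ y in R, ∫⁻ w in C, k w y := lintegral_lintegral_swap hk.aemeasurable
    _ ≤ ∫⁻ y in R, ∫⁻ w, (cube y s).indicator f w := by
        refine lintegral_mono fun y => (setLIntegral_le_lintegral _ _).trans_eq
          (lintegral_congr fun w => ?_)
        by_cases hy : y ∈ cube w s
        · simp [k, hy, mem_cube_comm.mp hy]
        · simp [k, hy, mt mem_cube_comm.mpr hy]
    _ = ∫⁻ y in R, ∫⁻ w in cube y s, f w := by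
        simp only [lintegral_indicator (measurableSet_cube _ s)]

end Covering

section Annuli

variable {n : ℕ} {F : ℝ → Euc n → ℝ≥0∞}

lemma lintegral_sq_le_lintegral_Gfun_sq (hF : Measurable (Function.uncurry F)) {s : ℝ}
    (hs : 0 < s) {C R : Set (Euc n)} (hC : MeasurableSet C) (hCR : ∀ w ∈ C, cube w s ⊆ R) :
    ∫⁻ w in C, F s w ^ 2 ≤ ∫⁻ y in R, Gfun F y ^ 2 := by
  set a := ENNReal.ofReal (s ^ n)
  have ha0 : a ≠ 0 := by positivity
  refine (ENNReal.mul_le_mul_iff_right ha0 ENNReal.ofReal_ne_top).mp ?_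
  have hFs : Measurable fun w => F s w ^ 2 := hF.of_uncurry_left.pow_const 2
  calc a * ∫⁻ w in C, F s w ^ 2
      = ∫⁻ w in C, F s w ^ 2 * volume (cube w s) := by
        simp only [volume_cube _ hs.le]
        rw [lintegral_mul_const _ hFs, mul_comm]
    _ ≤ ∫⁻ y in R, ∫⁻ w in cube y s, F s w ^ 2 := lintegral_mul_volume_cube_le hFs hC hCR
    _ ≤ ∫⁻ y in R, a * Gfun F y ^ 2 := lintegral_mono fun y =>
        lintegral_cube_sq_le _ _ hs (cubeL2Avg_le_Gfun F hs (mem_cube_self y hs.le))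
    _ = a * ∫⁻ y in R, Gfun F y ^ 2 := lintegral_const_mul' _ _ ENNReal.ofReal_ne_top

lemma lintegral_annulus_sq_le (hF : Measurable (Function.uncurry F)) {x z : Euc n} {ℓ : ℝ}
    (hx : x ∈ cube z ℓ) (j : ℕ) {s : ℝ} (hs₀ : 0 < s) (hs : s ≤ 2 * ℓ) :
    ∫⁻ w in annulus z ℓ j, F s w ^ 2 ≤
      ENNReal.ofReal ((4 * (2 ^ j * ℓ)) ^ n) * M2 (Gfun F) x ^ 2 := by
  have h2j : (1 : ℝ) ≤ 2 ^ j := one_le_pow₀ one_le_two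
  have hℓ : 0 < ℓ := by linarith
  have hA : 0 < 4 * (2 ^ j * ℓ) := by positivity
  calc ∫⁻ w in annulus z ℓ j, F s w ^ 2
      ≤ ∫⁻ w in cube z (2 ^ j * ℓ), F s w ^ 2 := lintegral_mono_set (annulus_subset_cube z ℓ j)
    _ ≤ ∫⁻ y in cube z (4 * (2 ^ j * ℓ)), Gfun F y ^ 2 :=
        lintegral_sq_le_lintegral_Gfun_sq hF hs₀ (measurableSet_cube _ _) fun w hw =>
          (cube_subset_cube_add hw s).trans (cube_mono z (by nlinarith))
    _ ≤ _ := lintegral_cube_sq_le _ _ hA (cubeL2Avg_le_M2 _ hA (cube_mono z (by nlinarith) hx))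

lemma annulus_term_le (hF : Measurable (Function.uncurry F)) (N : ℝ) {x z : Euc n} {ℓ : ℝ}
    (hℓ : 0 < ℓ) (hx : x ∈ cube z ℓ) (j : ℕ) :
    ENNReal.ofReal ((2 : ℝ) ^ (-(j : ℝ) * N)) *
        (ENNReal.ofReal (((2 : ℝ) ^ j * ℓ) ^ n)) ^ (-(1 : ℝ) / 2) *
        ⨆ s ∈ Set.Icc ℓ (Real.sqrt 2 * ℓ), (∫⁻ w in annulus z ℓ j, F s w ^ 2) ^ ((1 : ℝ) / 2) ≤
      2 ^ n * ENNReal.ofReal ((2 : ℝ) ^ (-N)) ^ j * M2 (Gfun F) x := by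
  set b := ENNReal.ofReal (((2 : ℝ) ^ j * ℓ) ^ n)
  have hcancel : b ^ (-(1 : ℝ) / 2) * b ^ ((1 : ℝ) / 2) = 1 := by
    rw [neg_div, ENNReal.rpow_neg, ENNReal.inv_mul_cancel (by positivity) (by finiteness)]
  have hweight :
      ENNReal.ofReal ((2 : ℝ) ^ (-(j : ℝ) * N)) = ENNReal.ofReal ((2 : ℝ) ^ (-N)) ^ j := by
    rw [← ENNReal.ofReal_pow (by positivity), ← Real.rpow_natCast, ← Real.rpow_mul zero_le_two,
      neg_mul_comm, mul_comm]
  have hsqrt2 : Real.sqrt 2 ≤ 2 := by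
    nlinarith [Real.sq_sqrt (zero_le_two : (0 : ℝ) ≤ 2), Real.sqrt_nonneg 2]
  have hsup : ⨆ s ∈ Set.Icc ℓ (Real.sqrt 2 * ℓ),
      (∫⁻ w in annulus z ℓ j, F s w ^ 2) ^ ((1 : ℝ) / 2) ≤
        2 ^ n * b ^ ((1 : ℝ) / 2) * M2 (Gfun F) x := by
    refine iSup₂_le fun s hs => ?_
    calc (∫⁻ w in annulus z ℓ j, F s w ^ 2) ^ ((1 : ℝ) / 2)
        ≤ (ENNReal.ofReal ((4 * (2 ^ j * ℓ)) ^ n) * M2 (Gfun F) x ^ 2) ^ ((1 : ℝ) / 2) :=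
          ENNReal.rpow_le_rpow (lintegral_annulus_sq_le hF hx j (hℓ.trans_le hs.1)
            (hs.2.trans (by nlinarith))) (by norm_num)
      _ = 2 ^ n * b ^ ((1 : ℝ) / 2) * M2 (Gfun F) x := by
        rw [ENNReal.ofReal_four_mul_pow, ENNReal.mul_rpow_of_nonneg _ _ (by norm_num),
          ENNReal.mul_rpow_of_nonneg _ _ (by norm_num), ENNReal.sq_rpow_half,
          ENNReal.sq_rpow_half]
  calc _ ≤ ENNReal.ofReal ((2 : ℝ) ^ (-(j : ℝ) * N)) * b ^ (-(1 : ℝ) / 2) *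
        (2 ^ n * b ^ ((1 : ℝ) / 2) * M2 (Gfun F) x) := by gcongr
    _ = ENNReal.ofReal ((2 : ℝ) ^ (-(j : ℝ) * N)) * (b ^ (-(1 : ℝ) / 2) * b ^ ((1 : ℝ) / 2)) *
        2 ^ n * M2 (Gfun F) x := by ring
    _ = 2 ^ n * ENNReal.ofReal ((2 : ℝ) ^ (-N)) ^ j * M2 (Gfun F) x := by
      rw [hcancel, hweight]
      ring

end Annuli

theorem statement8_general (n : ℕ) (N : ℝ) (hN : 0 < N) :
    ∃ C > 0, ∀ F : ℝ → Euc n → ℝ≥0∞, Measurable (Function.uncurry F) →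
      ∀ (x z : Euc n) (ℓ : ℝ), 0 < ℓ → x ∈ cube z ℓ →
        (∑' j : ℕ, ENNReal.ofReal ((2 : ℝ) ^ (-(j : ℝ) * N)) *
            (ENNReal.ofReal (((2 : ℝ) ^ j * ℓ) ^ n)) ^ (-(1 : ℝ) / 2) *
            ⨆ s ∈ Set.Icc ℓ (Real.sqrt 2 * ℓ),
              (∫⁻ w in annulus z ℓ j, F s w ^ 2) ^ ((1 : ℝ) / 2)) ≤
          ENNReal.ofReal C * M2 (Gfun F) x := by
  set r : ℝ := (2 : ℝ) ^ (-N)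
  have hr0 : 0 ≤ r := by positivity
  have hr1 : 0 < 1 - r := sub_pos.2 (Real.rpow_lt_one_of_one_lt_of_neg one_lt_two (by linarith))
  refine ⟨2 ^ n * (1 - r)⁻¹, by positivity, fun F hF x z ℓ hℓ hx => ?_⟩
  calc _ ≤ ∑' j : ℕ, 2 ^ n * ENNReal.ofReal r ^ j * M2 (Gfun F) x :=
        ENNReal.tsum_le_tsum fun j => annulus_term_le hF N hℓ hx j
    _ = 2 ^ n * (1 - ENNReal.ofReal r)⁻¹ * M2 (Gfun F) x := by
        rw [ENNReal.tsum_mul_right, ENNReal.tsum_mul_left, ENNReal.tsum_geometric]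
    _ = _ := by
        rw [ENNReal.ofReal_mul (by positivity), ENNReal.ofReal_inv_of_pos hr1,
          ENNReal.ofReal_sub _ hr0, ENNReal.ofReal_one, ENNReal.ofReal_pow zero_le_two,
          ENNReal.ofReal_ofNat]

/-- The weighted sum over dyadic annuli of `L²` averages at comparable scales is controlled
by the iterated maximal function `ℳ₂(G)`. -/
theorem statement8 (n : ℕ) (hn : 1 ≤ n) (N : ℝ) (hN : 0 < N) :
    ∃ C > 0, ∀ F : ℝ → Euc n → ℝ≥0∞, Measurable (Function.uncurry F) →
      ∀ (x z : Euc n) (ℓ : ℝ), 0 < ℓ → x ∈ cube z ℓ →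
        (∑' j : ℕ, ENNReal.ofReal ((2 : ℝ) ^ (-(j : ℝ) * N)) *
            (ENNReal.ofReal (((2 : ℝ) ^ j * ℓ) ^ n)) ^ (-(1 : ℝ) / 2) *
            ⨆ s ∈ Set.Icc ℓ (Real.sqrt 2 * ℓ),
              (∫⁻ w in annulus z ℓ j, F s w ^ 2) ^ ((1 : ℝ) / 2)) ≤
          ENNReal.ofReal C * M2 (Gfun F) x :=
  statement8_general n N hN
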